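/- Suppose the standing assumptions hold (x_1,…,x_n i.i.d. from q0 with q0 ∈ Q^adm_{q0}(𝒳), every p_θ ∈ Q^adm_{q0}(𝒳), and the PMF estimate q̂_α ∈ Q^adm_{q0}(𝒳) almost surely), together with Assumption A2, Assumption A3, and Assumption A4(r) for r = 0. Then for every θ ∈ Θ, the empirical LRM loss converges pointwise almost surely: L̂_n(θ) → L(θ) as n → ∞. -/

import Mathlib

/-!
Split `L̂ₙ(θ)` into the empirical mean of `φ = lrmTerm M p_θ q0` and the empirical mean of
`ψₙ - φ` with `ψₙ = lrmTerm M p_θ q̂_α`. The strong law of large numbers sends the first to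
`∑' x, q0 x * φ x = L(θ)`; applied to indicators, it also gives `q̂_α → q0` pointwise, hence
`ψₙ → φ` on the support of `q0`, where the sample lives almost surely. So the second mean tends to
zero over any finite set of states, and what remains is to make the contribution of the other
states small uniformly in `n`. For finite `𝒳` there is nothing left. Otherwise `|ψₙ - φ|` is
eventually dominated by `G = 2 |K₀| (C + K_{q0}) (1 + ‖x‖^γ)`, where `C` eventually bounds
`K_{q̂,n}`; `G` is `q0`-summable because `K₀ ∈ L²(q0)` and the tails of `q0` are subexponential.
By the strong law again, the empirical mean of `G` off a finite set `F` tends to the tail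
`∑' x ∉ F, q0 x * G x`, which is small for large `F`.
-/

open MeasureTheory Filter Topology ProbabilityTheory

theorem abs_sq_sub_two_mul_le (a b : ℝ) : |a ^ 2 - 2 * a * b| ≤ 2 * a ^ 2 + b ^ 2 := by
  rw [abs_le]
  constructor <;> nlinarith [sq_nonneg (a - b), sq_nonneg (a + b)]

theorem abs_one_div_card_mul_sum_le {ι : Type*} {s : Finset ι} {f : ι → ℝ} {B : ℝ}
    (hB : 0 ≤ B) (hf : ∀ i ∈ s, |f i| ≤ B) : |1 / (s.card : ℝ) * ∑ i ∈ s, f i| ≤ B := by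
  rcases s.eq_empty_or_nonempty with rfl | hs
  · simpa using hB
  have hcard : (0 : ℝ) < s.card := by exact_mod_cast hs.card_pos
  rw [abs_mul, abs_of_pos (one_div_pos.2 hcard), one_div_mul_eq_div, div_le_iff₀ hcard]
  calc |∑ i ∈ s, f i| ≤ ∑ i ∈ s, |f i| := Finset.abs_sum_le_sum_abs _ _
    _ ≤ ∑ _i ∈ s, B := Finset.sum_le_sum hf
    _ = B * s.card := by rw [Finset.sum_const, nsmul_eq_mul, mul_comm]

theorem rpow_le_mul_exp {s c t : ℝ} (hs : 0 < s) (hc : 0 < c) (ht : 0 ≤ t) :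
    t ^ s ≤ (s / c) ^ s * Real.exp (c * t) := by
  have hct : 0 ≤ c / s * t := by positivity
  calc t ^ s = (s / c) ^ s * (c / s * t) ^ s := by
        rw [← Real.mul_rpow (by positivity) hct]
        field_simp
    _ ≤ (s / c) ^ s * Real.exp (c / s * t) ^ s := by
        gcongr
        linarith [Real.add_one_le_exp (c / s * t)]
    _ = (s / c) ^ s * Real.exp (c * t) := by
        rw [← Real.exp_mul]
        field_simp

section Summability

variable {𝒳 : Type*}

theorem summable_mul_one_add_rpow_sq_of_summable_mul_exp {w ν : 𝒳 → ℝ} (hw : ∀ x, 0 ≤ w x)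
    (hν : ∀ x, 0 ≤ ν x) {c γ : ℝ} (hc : 0 < c) (hγ : 0 < γ)
    (hexp : Summable fun x => w x * Real.exp (c * ν x)) :
    Summable fun x => w x * (1 + ν x ^ γ) ^ 2 := by
  set C := (γ / (c / 2)) ^ γ
  refine Summable.of_nonneg_of_le (fun x => mul_nonneg (hw x) (sq_nonneg _)) (fun x => ?_)
    (hexp.mul_left ((1 + C) ^ 2))
  have hle : 1 + ν x ^ γ ≤ (1 + C) * Real.exp (c / 2 * ν x) := by
    have h1 : 1 ≤ Real.exp (c / 2 * ν x) := Real.one_le_exp (by have := hν x; positivity)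
    have h2 : ν x ^ γ ≤ C * Real.exp (c / 2 * ν x) := rpow_le_mul_exp hγ (half_pos hc) (hν x)
    linarith
  calc w x * (1 + ν x ^ γ) ^ 2 ≤ w x * ((1 + C) * Real.exp (c / 2 * ν x)) ^ 2 := by
        gcongr
        · exact hw x
        · have := hν x; positivity
    _ = (1 + C) ^ 2 * (w x * Real.exp (c * ν x)) := by
        rw [mul_pow, ← Real.exp_nat_mul]
        ring_nf

theorem summable_mul_abs_mul_abs_of_summable_mul_sq {w f h : 𝒳 → ℝ} (hw : ∀ x, 0 ≤ w x)
    (hf : Summable fun x => w x * f x ^ 2) (hh : Summable fun x => w x * h x ^ 2) :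
    Summable fun x => w x * (|f x| * |h x|) := by
  refine Summable.of_nonneg_of_le (fun x => by have := hw x; positivity) (fun x => ?_) (hf.add hh)
  rw [← mul_add]
  gcongr
  · exact hw x
  · nlinarith [sq_abs (f x), sq_abs (h x), sq_nonneg (|f x| - |h x|)]

end Summability

section LRMTerm

variable {𝒳 : Type*}

/-- `L(θ) = ∑' x, q0 x * lrmTerm M p_θ q0 x`, and `L̂ₙ(θ)` is the empirical mean of
`lrmTerm M p_θ q̂_α`. -/
noncomputable def lrmTerm (M : 𝒳 → Finset 𝒳) (p q : 𝒳 → ℝ) (x : 𝒳) : ℝ :=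
  (1 / ((M x).card : ℝ)) * ∑ x' ∈ M x,
    ((Real.log (p x' / p x)) ^ 2 - 2 * Real.log (p x' / p x) * Real.log (q x' / q x))

theorem summable_mul_abs_lrmTerm {M : 𝒳 → Finset 𝒳} {w p q : 𝒳 → ℝ} (hw : ∀ x, 0 ≤ w x)
    (hp : Summable fun x => w x * ∑ x' ∈ M x, (Real.log (p x' / p x)) ^ 2)
    (hq : Summable fun x => w x * ∑ x' ∈ M x, (Real.log (q x' / q x)) ^ 2) :
    Summable fun x => w x * |lrmTerm M p q x| := by
  refine Summable.of_nonneg_of_le (fun x => mul_nonneg (hw x) (abs_nonneg _)) (fun x => ?_)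
    ((hp.mul_left 2).add hq)
  have hbound : |lrmTerm M p q x| ≤ ∑ x' ∈ M x,
      (2 * Real.log (p x' / p x) ^ 2 + Real.log (q x' / q x) ^ 2) := by
    rw [lrmTerm, abs_mul, one_div, abs_inv, Nat.abs_cast]
    refine (mul_le_of_le_one_left (abs_nonneg _) (Nat.cast_inv_le_one _)).trans ?_
    exact (Finset.abs_sum_le_sum_abs _ _).trans
      (Finset.sum_le_sum fun x' _ => abs_sq_sub_two_mul_le _ _)
  calc w x * |lrmTerm M p q x| ≤ w x * ∑ x' ∈ M x,
        (2 * Real.log (p x' / p x) ^ 2 + Real.log (q x' / q x) ^ 2) := by gcongr; exact hw x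
    _ = _ := by rw [Finset.sum_add_distrib, ← Finset.mul_sum]; ring

theorem abs_lrmTerm_sub_le {M : 𝒳 → Finset 𝒳} {p q q' : 𝒳 → ℝ} {x : 𝒳} {a b : ℝ}
    (ha : 0 ≤ a) (hb : 0 ≤ b) (hp : ∀ x' ∈ M x, |Real.log (p x' / p x)| ≤ a)
    (hq : ∀ x' ∈ M x, |Real.log (q x' / q x) - Real.log (q' x' / q' x)| ≤ b) :
    |lrmTerm M p q x - lrmTerm M p q' x| ≤ 2 * a * b := by
  rw [lrmTerm, lrmTerm, ← mul_sub, ← Finset.sum_sub_distrib]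
  refine abs_one_div_card_mul_sum_le (by positivity) fun x' hx' => ?_
  calc _ = 2 * |Real.log (p x' / p x)| * |Real.log (q' x' / q' x) - Real.log (q x' / q x)| := by
        rw [← abs_two, ← abs_mul, ← abs_mul]; ring_nf
    _ ≤ 2 * a * b := by
        rw [abs_sub_comm]
        gcongr
        exacts [hp x' hx', hq x' hx']

theorem tendsto_lrmTerm {ι : Type*} {l : Filter ι} {M : 𝒳 → Finset 𝒳} {p q₀ : 𝒳 → ℝ}
    {q : ι → 𝒳 → ℝ} {x : 𝒳} (hq : ∀ y, Tendsto (fun i => q i y) l (𝓝 (q₀ y)))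
    (hx : q₀ x ≠ 0) (hM : ∀ x' ∈ M x, q₀ x' ≠ 0) :
    Tendsto (fun i => lrmTerm M p (q i) x) l (𝓝 (lrmTerm M p q₀ x)) := by
  refine tendsto_const_nhds.mul (tendsto_finsetSum _ fun x' hx' =>
    tendsto_const_nhds.sub (tendsto_const_nhds.mul ?_))
  exact (Real.continuousAt_log (div_ne_zero (hM x' hx') hx)).tendsto.comp ((hq x').div (hq x) hx)

theorem exists_summable_envelope_lrmTerm_sub {M : 𝒳 → Finset 𝒳} {w p q₀ ν K : 𝒳 → ℝ}
    (hw : ∀ x, 0 ≤ w x) (hν : ∀ x, 0 ≤ ν x) {c γ C₀ : ℝ} (hc : 0 < c) (hγ : 0 < γ)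
    (hexp : Summable fun x => w x * Real.exp (c * ν x)) (hK : Summable fun x => w x * K x ^ 2)
    (hp : ∀ x, ∀ x' ∈ M x, |Real.log (p x' / p x)| ≤ K x)
    (hq₀ : ∀ x, ∀ x' ∈ M x, |Real.log (q₀ x' / q₀ x)| ≤ C₀ * (1 + ν x ^ γ)) (C : ℝ) :
    ∃ G : 𝒳 → ℝ, (∀ x, 0 ≤ G x) ∧ (Summable fun x => w x * G x) ∧
      ∀ q : 𝒳 → ℝ, (∀ x, ∀ x' ∈ M x, |Real.log (q x' / q x)| ≤ C * (1 + ν x ^ γ)) →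
        ∀ x, |lrmTerm M p q x - lrmTerm M p q₀ x| ≤ G x := by
  set u : 𝒳 → ℝ := fun x => (|C| + |C₀|) * (1 + ν x ^ γ)
  have hu : ∀ x, 0 ≤ u x := fun x => by have := hν x; positivity
  have hu_sq : Summable fun x => w x * u x ^ 2 :=
    ((summable_mul_one_add_rpow_sq_of_summable_mul_exp hw hν hc hγ hexp).mul_left
      ((|C| + |C₀|) ^ 2)).congr fun x => by ring
  refine ⟨fun x => 2 * |K x| * u x, fun x => by have := hu x; positivity,
    ((summable_mul_abs_mul_abs_of_summable_mul_sq hw hK hu_sq).mul_left 2).congr fun x => ?_,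
    fun q hq x => abs_lrmTerm_sub_le (abs_nonneg _) (hu x)
      (fun x' hx' => (hp x x' hx').trans (le_abs_self _)) fun x' hx' => ?_⟩
  · rw [abs_of_nonneg (hu x)]
    ring
  · calc _ ≤ |Real.log (q x' / q x)| + |Real.log (q₀ x' / q₀ x)| := abs_sub _ _
      _ ≤ C * (1 + ν x ^ γ) + C₀ * (1 + ν x ^ γ) := add_le_add (hq x x' hx') (hq₀ x x' hx')
      _ ≤ u x := by
        have : 0 ≤ 1 + ν x ^ γ := by have := hν x; positivity
        simp only [u]
        nlinarith [le_abs_self C, le_abs_self C₀]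

end LRMTerm

section EmpiricalMean

variable {𝒳 : Type*}

noncomputable def empiricalMean (x : ℕ → 𝒳) (n : ℕ) (f : 𝒳 → ℝ) : ℝ :=
  (∑ i ∈ Finset.range n, f (x i)) / n

theorem tendsto_add_div_add_of_tendsto_div {c : ℕ → ℝ} {L : ℝ} (a b : ℝ)
    (hc : Tendsto (fun n => c n / n) atTop (𝓝 L)) :
    Tendsto (fun n => (c n + a) / (n + b)) atTop (𝓝 L) := by
  have hnum := hc.add (tendsto_const_div_atTop_nhds_zero_nat a)
  have hden := tendsto_const_nhds (x := (1 : ℝ)).add (tendsto_const_div_atTop_nhds_zero_nat b)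
  rw [add_zero] at hnum hden
  have hquot := hnum.div hden one_ne_zero
  rw [div_one] at hquot
  refine hquot.congr' ?_
  filter_upwards [eventually_ne_atTop 0] with n hn
  have hn' : (n : ℝ) ≠ 0 := Nat.cast_ne_zero.2 hn
  rw [Pi.div_apply, ← add_div, ← div_self hn', ← add_div, div_div_div_cancel_right₀ hn']

theorem tendsto_empiricalMean_of_tendsto_of_tail {x : ℕ → 𝒳} {S : Set 𝒳} (hxS : ∀ i, x i ∈ S)
    {g : ℕ → 𝒳 → ℝ} (hg : ∀ y ∈ S, Tendsto (fun n => g n y) atTop (𝓝 0))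
    (htail : ∀ ε > 0, ∃ F : Finset 𝒳, ∀ᶠ n in atTop,
      empiricalMean x n ((↑F : Set 𝒳)ᶜ.indicator fun y => |g n y|) ≤ ε) :
    Tendsto (fun n => empiricalMean x n (g n)) atTop (𝓝 0) := by
  classical
  refine Metric.tendsto_nhds.2 fun ε hε => ?_
  obtain ⟨F, hF⟩ := htail (ε / 2) (half_pos hε)
  set A : ℕ → ℝ := fun n => ∑ y ∈ F.filter (· ∈ S), |g n y|
  have hA : Tendsto A atTop (𝓝 0) := by
    simpa using tendsto_finsetSum _ fun y hy => (hg y (Finset.mem_filter.1 hy).2).abs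
  filter_upwards [hF, hA.eventually_lt_const (half_pos hε), eventually_gt_atTop 0]
    with n hFn hAn hn
  have hterm : ∀ i, |g n (x i)| ≤ A n + (↑F : Set 𝒳)ᶜ.indicator (fun y => |g n y|) (x i) := by
    intro i
    by_cases hi : x i ∈ F
    · rw [Set.indicator_of_notMem (by simpa using hi), add_zero]
      exact Finset.single_le_sum (f := fun y => |g n y|) (fun _ _ => abs_nonneg _)
        (Finset.mem_filter.2 ⟨hi, hxS i⟩)
    · rw [Set.indicator_of_mem (by simpa using hi)]
      exact le_add_of_nonneg_left (Finset.sum_nonneg fun _ _ => abs_nonneg _)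
  calc dist (empiricalMean x n (g n)) 0 = |∑ i ∈ Finset.range n, g n (x i)| / n := by
        rw [Real.dist_0_eq_abs, empiricalMean, abs_div, Nat.abs_cast]
    _ ≤ (∑ i ∈ Finset.range n, (A n + (↑F : Set 𝒳)ᶜ.indicator (fun y => |g n y|) (x i))) / n := by
        gcongr
        exact (Finset.abs_sum_le_sum_abs _ _).trans (Finset.sum_le_sum fun i _ => hterm i)
    _ = A n + empiricalMean x n ((↑F : Set 𝒳)ᶜ.indicator fun y => |g n y|) := by
        rw [Finset.sum_add_distrib, Finset.sum_const, Finset.card_range, nsmul_eq_mul, add_div,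
          mul_div_cancel_left₀ _ (Nat.cast_ne_zero.2 hn.ne'), empiricalMean]
    _ < ε / 2 + ε / 2 := add_lt_add_of_lt_of_le hAn hFn
    _ = ε := add_halves ε

theorem exists_tail_empiricalMean_le_of_abs_le {x : ℕ → 𝒳} {g : ℕ → 𝒳 → ℝ} {G : 𝒳 → ℝ}
    {t : Finset 𝒳 → ℝ} (hgG : ∀ᶠ n in atTop, ∀ y, |g n y| ≤ G y)
    (hG : ∀ F : Finset 𝒳,
      Tendsto (fun n => empiricalMean x n ((↑F : Set 𝒳)ᶜ.indicator G)) atTop (𝓝 (t F)))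
    (ht : Tendsto t atTop (𝓝 0)) :
    ∀ ε > 0, ∃ F : Finset 𝒳, ∀ᶠ n in atTop,
      empiricalMean x n ((↑F : Set 𝒳)ᶜ.indicator fun y => |g n y|) ≤ ε := by
  intro ε hε
  obtain ⟨F, hF⟩ := (ht.eventually (gt_mem_nhds hε)).exists
  refine ⟨F, ?_⟩
  filter_upwards [hgG, (hG F).eventually (gt_mem_nhds hF)] with n hgGn hGn
  refine le_trans ?_ hGn.le
  unfold empiricalMean
  gcongr with i
  exact hgGn _

theorem tendsto_tsum_mul_indicator_compl_atTop (q G : 𝒳 → ℝ) :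
    Tendsto (fun F : Finset 𝒳 => ∑' x, q x * (↑F : Set 𝒳)ᶜ.indicator G x) atTop (𝓝 0) := by
  refine (tendsto_tsum_compl_atTop_zero fun x => q x * G x).congr fun F => ?_
  simp_rw [← Set.indicator_mul_right]
  exact tsum_subtype (↑F : Set 𝒳)ᶜ fun x => q x * G x

end EmpiricalMean

theorem integrable_and_integral_eq_tsum {𝒳 : Type*} [Countable 𝒳] [MeasurableSpace 𝒳]
    [MeasurableSingletonClass 𝒳] {ν : Measure 𝒳} {q0 : 𝒳 → ℝ} (hq0 : ∀ x, 0 ≤ q0 x)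
    (hν : ∀ x, ν {x} = ENNReal.ofReal (q0 x)) {f : 𝒳 → ℝ}
    (hf : Summable fun x => q0 x * |f x|) :
    Integrable f ν ∧ ∫ x, f x ∂ν = ∑' x, q0 x * f x := by
  have hint : Integrable f ν := by
    refine ⟨(measurable_of_countable f).aestronglyMeasurable, ?_⟩
    rw [hasFiniteIntegral_iff_norm, lintegral_countable']
    simp_rw [hν, Real.norm_eq_abs, ← ENNReal.ofReal_mul (abs_nonneg _), mul_comm (|f _|),
      ← ENNReal.ofReal_tsum_of_nonneg (fun x => mul_nonneg (hq0 x) (abs_nonneg _)) hf]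
    exact ENNReal.ofReal_lt_top
  refine ⟨hint, (integral_countable hint).trans (tsum_congr fun x => ?_)⟩
  rw [measureReal_def, hν, ENNReal.toReal_ofReal (hq0 x), smul_eq_mul]

section Sampling

variable {𝒳 : Type*} [Countable 𝒳] {Ω : Type*} [MeasurableSpace Ω] {μ : Measure Ω}
  {q0 : 𝒳 → ℝ} {X : ℕ → Ω → 𝒳}

theorem ae_forall_pos_of_preimage_singleton
    (hX_dist : ∀ i x, μ (X i ⁻¹' {x}) = ENNReal.ofReal (q0 x)) :
    ∀ᵐ ω ∂μ, ∀ i, 0 < q0 (X i ω) := by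
  refine ae_all_iff.2 fun i => ?_
  have hnull : ∀ x ∈ {x | q0 x ≤ 0}, μ (X i ⁻¹' {x}) = 0 := fun x hx => by
    rw [hX_dist, ENNReal.ofReal_eq_zero.2 hx]
  rw [ae_iff]
  convert (measure_biUnion_null_iff (Set.to_countable _)).2 hnull
  ext ω
  simp

variable [MeasurableSpace 𝒳] [MeasurableSingletonClass 𝒳]

theorem identDistrib_of_preimage_singleton (hX_meas : ∀ i, Measurable (X i))
    (hX_dist : ∀ i x, μ (X i ⁻¹' {x}) = ENNReal.ofReal (q0 x)) (i j : ℕ) :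
    IdentDistrib (X i) (X j) μ μ := by
  refine ⟨(hX_meas i).aemeasurable, (hX_meas j).aemeasurable, ?_⟩
  refine Measure.ext_of_singleton fun x => ?_
  rw [Measure.map_apply (hX_meas i) (measurableSet_singleton x),
    Measure.map_apply (hX_meas j) (measurableSet_singleton x), hX_dist, hX_dist]

theorem ae_tendsto_empiricalMean (hq0 : ∀ x, 0 ≤ q0 x) (hX_meas : ∀ i, Measurable (X i))
    (hX_dist : ∀ i x, μ (X i ⁻¹' {x}) = ENNReal.ofReal (q0 x)) (hX_indep : iIndepFun X μ)
    {f : 𝒳 → ℝ} (hf : Summable fun x => q0 x * |f x|) :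
    ∀ᵐ ω ∂μ, Tendsto (fun n => empiricalMean (X · ω) n f) atTop (𝓝 (∑' x, q0 x * f x)) := by
  have hfm : Measurable f := measurable_of_countable f
  obtain ⟨hint, hmean⟩ := integrable_and_integral_eq_tsum hq0 (fun x => by
    rw [Measure.map_apply (hX_meas 0) (measurableSet_singleton x), hX_dist]) hf
  have hlaw := strong_law_ae_real (fun i => f ∘ X i)
    ((integrable_map_measure hfm.aestronglyMeasurable (hX_meas 0).aemeasurable).1 hint)
    (fun i j hij => (hX_indep.indepFun hij).comp hfm hfm)
    (fun i => (identDistrib_of_preimage_singleton hX_meas hX_dist i 0).comp hfm)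
  rwa [← hmean, integral_map (hX_meas 0).aemeasurable hfm.aestronglyMeasurable]

theorem ae_tendsto_frequency [DecidableEq 𝒳] (hq0 : ∀ x, 0 ≤ q0 x)
    (hX_meas : ∀ i, Measurable (X i))
    (hX_dist : ∀ i x, μ (X i ⁻¹' {x}) = ENNReal.ofReal (q0 x)) (hX_indep : iIndepFun X μ) :
    ∀ᵐ ω ∂μ, ∀ x, Tendsto (fun n => empiricalMean (X · ω) n fun y => if y = x then 1 else 0)
      atTop (𝓝 (q0 x)) := by
  refine ae_all_iff.2 fun x => ?_
  have hf : Summable fun y => q0 y * |if y = x then (1 : ℝ) else 0| :=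
    summable_of_ne_finset_zero (s := {x}) fun y hy => by simp_all
  convert ae_tendsto_empiricalMean hq0 hX_meas hX_dist hX_indep hf using 4
  rw [tsum_eq_single x fun y hy => by simp [hy], if_pos rfl, mul_one]

theorem ae_exists_tail_empiricalMean_le (hq0 : ∀ x, 0 ≤ q0 x) (hX_meas : ∀ i, Measurable (X i))
    (hX_dist : ∀ i x, μ (X i ⁻¹' {x}) = ENNReal.ofReal (q0 x)) (hX_indep : iIndepFun X μ)
    {G : 𝒳 → ℝ} (hG0 : ∀ x, 0 ≤ G x) (hG : Summable fun x => q0 x * G x)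
    {g : ℕ → Ω → 𝒳 → ℝ} (hgG : ∀ ω, ∀ᶠ n in atTop, ∀ y, |g n ω y| ≤ G y) :
    ∀ᵐ ω ∂μ, ∀ ε > 0, ∃ F : Finset 𝒳, ∀ᶠ n in atTop,
      empiricalMean (X · ω) n ((↑F : Set 𝒳)ᶜ.indicator fun y => |g n ω y|) ≤ ε := by
  have hGF : ∀ F : Finset 𝒳, Summable fun x => q0 x * |(↑F : Set 𝒳)ᶜ.indicator G x| := fun F =>
    hG.of_nonneg_of_le (fun x => mul_nonneg (hq0 x) (abs_nonneg _)) fun x => by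
      rw [abs_of_nonneg (Set.indicator_nonneg (fun y _ => hG0 y) x)]
      exact mul_le_mul_of_nonneg_left (Set.indicator_le_self' (fun y _ => hG0 y) x) (hq0 x)
  filter_upwards [ae_all_iff.2 fun F => ae_tendsto_empiricalMean hq0 hX_meas hX_dist hX_indep
    (hGF F)] with ω hω
  exact exists_tail_empiricalMean_le_of_abs_le (hgG ω) hω
    (tendsto_tsum_mul_indicator_compl_atTop q0 G)

end Sampling

theorem lrm_loss_pointwise_convergence_general
    {𝒳 : Type*} [Countable 𝒳] [DecidableEq 𝒳] [MeasurableSpace 𝒳] [MeasurableSingletonClass 𝒳]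
    {Ω : Type*} [MeasurableSpace Ω] (μ : Measure Ω)
    {d : ℕ} (Θ : Set (Fin d → ℝ))
    -- q0 is a PMF on 𝒳
    (q0 : 𝒳 → ℝ) (hq0_nonneg : ∀ x, 0 ≤ q0 x)
    -- matching set with M(x) ⊆ supp(q0) and |M(x)| = m < ∞
    (M : 𝒳 → Finset 𝒳)
    (hM_supp : ∀ x, ∀ x' ∈ M x, 0 < q0 x')
    -- Standing Assumption (a): q0 ∈ Q^adm_{q0}(𝒳)
    (hq0_adm : Summable fun x => q0 x * ∑ x' ∈ M x, (Real.log (q0 x' / q0 x)) ^ 2)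
    -- the model family
    (pθ : (Fin d → ℝ) → 𝒳 → ℝ)
    -- Standing Assumption (b): every p_θ, θ ∈ Θ, lies in Q^adm_{q0}(𝒳)
    (hpθ_adm : ∀ θ ∈ Θ, Summable fun x => q0 x * ∑ x' ∈ M x, (Real.log (pθ θ x' / pθ θ x)) ^ 2)
    -- i.i.d. observations from q0
    (X : ℕ → Ω → 𝒳)
    (hX_meas : ∀ i, Measurable (X i))
    (hX_dist : ∀ i x, μ (X i ⁻¹' {x}) = ENNReal.ofReal (q0 x))
    (hX_indep : iIndepFun X μ)
    -- the Laplace-smoothed estimator q̂_α with α > 0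
    (α : ℝ)
    (qdag : 𝒳 → ℝ)
    (Zdag : ℝ)
    (qhat : ℕ → Ω → 𝒳 → ℝ)
    (hqhat : ∀ n ω x, qhat n ω x =
      ((∑ i ∈ Finset.range n, if X i ω = x then (1 : ℝ) else 0) + α * qdag x)
        / ((n : ℝ) + α * Zdag))
    -- Assumption A2: either 𝒳 is finite, or 𝒳 is countably infinite, q0 is subexponential,
    -- and the log-ratios of q0 and q̂_α grow at most polynomially
    (nrmX : 𝒳 → ℝ) (hnrmX : ∀ x, 0 ≤ nrmX x)
    (hA2 : Finite 𝒳 ∨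
      (Infinite 𝒳 ∧ (∃ c > (0 : ℝ), Summable fun x => q0 x * Real.exp (c * nrmX x)) ∧
        ∃ Kq0 > (0 : ℝ), ∃ γ > (1 : ℝ), ∃ Khat : ℕ → ℝ,
          (∀ n, 0 ≤ Khat n) ∧ IsBoundedUnder (· ≤ ·) atTop Khat ∧
          (∀ x, ∀ x' ∈ M x, |Real.log (q0 x' / q0 x)| ≤ Kq0 * (1 + nrmX x ^ γ)) ∧
          (∀ n ω x, ∀ x' ∈ M x,
            |Real.log (qhat n ω x' / qhat n ω x)| ≤ Khat n * (1 + nrmX x ^ γ))))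
    -- the population and empirical LRM losses
    (Lpop : (Fin d → ℝ) → ℝ)
    (hLpop : ∀ θ, Lpop θ = ∑' x, q0 x * ((1 / ((M x).card : ℝ)) *
      ∑ x' ∈ M x, ((Real.log (pθ θ x' / pθ θ x)) ^ 2
        - 2 * Real.log (pθ θ x' / pθ θ x) * Real.log (q0 x' / q0 x))))
    (Lhat : ℕ → Ω → (Fin d → ℝ) → ℝ)
    (hLhat : ∀ n ω θ, Lhat n ω θ = (1 / (n : ℝ)) * ∑ i ∈ Finset.range n,
      ((1 / ((M (X i ω)).card : ℝ)) * ∑ x' ∈ M (X i ω),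
        ((Real.log (pθ θ x' / pθ θ (X i ω))) ^ 2
          - 2 * Real.log (pθ θ x' / pθ θ (X i ω))
              * Real.log (qhat n ω x' / qhat n ω (X i ω)))))
    -- Assumption A4 with r = 0: smoothness of the model and an L²(q0) envelope for the
    -- log-ratios (the 0-th derivative)
    (K : ℕ → 𝒳 → ℝ)
    (hK_L2 : ∀ ρ ≤ 0, Summable fun x => q0 x * (K ρ x) ^ 2)
    (hA4_bound : ∀ ρ ≤ 0, ∀ x, ∀ x' ∈ M x, ∀ θ ∈ Θ,
      ‖iteratedFDerivWithin ℝ ρ (fun t => Real.log (pθ t x' / pθ t x)) Θ θ‖ ≤ K ρ x) :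
    -- conclusion: almost-sure pointwise convergence of the empirical loss
    ∀ θ ∈ Θ, ∀ᵐ ω ∂μ, Tendsto (fun n => Lhat n ω θ) atTop (𝓝 (Lpop θ)) := by
  intro θ hθ
  set φ : 𝒳 → ℝ := lrmTerm M (pθ θ) q0
  set ψ : ℕ → Ω → 𝒳 → ℝ := fun n ω => lrmTerm M (pθ θ) (qhat n ω)
  have hLpop_eq : Lpop θ = ∑' x, q0 x * φ x := hLpop θ
  have hLhat_eq : ∀ n ω, Lhat n ω θ =
      empiricalMean (X · ω) n φ + empiricalMean (X · ω) n (ψ n ω - φ) := fun n ω => by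
    rw [hLhat, empiricalMean, empiricalMean, ← add_div, ← Finset.sum_add_distrib,
      one_div_mul_eq_div]
    simp only [Pi.sub_apply, add_sub_cancel, φ, ψ, lrmTerm]
  have hqhat_lim : ∀ᵐ ω ∂μ, ∀ x, Tendsto (fun n => qhat n ω x) atTop (𝓝 (q0 x)) := by
    filter_upwards [ae_tendsto_frequency hq0_nonneg hX_meas hX_dist hX_indep] with ω hω x
    simpa only [hqhat] using tendsto_add_div_add_of_tendsto_div _ _ (hω x)
  have hψ_tail : ∀ᵐ ω ∂μ, ∀ ε > 0, ∃ F : Finset 𝒳, ∀ᶠ n in atTop,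
      empiricalMean (X · ω) n ((↑F : Set 𝒳)ᶜ.indicator fun y => |(ψ n ω - φ) y|) ≤ ε := by
    rcases hA2 with hfin | ⟨-, ⟨c, hc, hexp⟩, Kq0, -, γ, hγ, Khat, -, ⟨B, hB⟩, hq0_growth,
      hqhat_growth⟩
    · have := Fintype.ofFinite 𝒳
      exact ae_of_all _ fun ω ε hε => ⟨Finset.univ, .of_forall fun n => by
        simpa [empiricalMean] using hε.le⟩
    have hK0 : ∀ x, ∀ x' ∈ M x, |Real.log (pθ θ x' / pθ θ x)| ≤ K 0 x := fun x x' hx' => by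
      simpa using hA4_bound 0 le_rfl x x' hx' θ hθ
    obtain ⟨G, hG0, hG, hGq⟩ := exists_summable_envelope_lrmTerm_sub hq0_nonneg hnrmX hc
      (by linarith) hexp (hK_L2 0 le_rfl) hK0 hq0_growth B
    refine ae_exists_tail_empiricalMean_le hq0_nonneg hX_meas hX_dist hX_indep hG0 hG
      fun ω => (eventually_map.1 hB).mono fun n hn => hGq _ fun x x' hx' => ?_
    exact (hqhat_growth n ω x x' hx').trans
      (mul_le_mul_of_nonneg_right hn (by linarith [Real.rpow_nonneg (hnrmX x) γ]))
  filter_upwards [ae_tendsto_empiricalMean hq0_nonneg hX_meas hX_dist hX_indep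
      (summable_mul_abs_lrmTerm hq0_nonneg (hpθ_adm θ hθ) hq0_adm),
    ae_forall_pos_of_preimage_singleton hX_dist, hqhat_lim, hψ_tail] with ω hφ_lim hpos hq htail
  have hψ_lim : ∀ x ∈ {x | 0 < q0 x}, Tendsto (fun n => (ψ n ω - φ) x) atTop (𝓝 0) :=
    fun x hx => sub_self (φ x) ▸
      (tendsto_lrmTerm hq (ne_of_gt hx) fun x' hx' => (hM_supp x x' hx').ne').sub_const (φ x)
  have hdiff_lim := tendsto_empiricalMean_of_tendsto_of_tail (S := {x | 0 < q0 x}) hpos hψ_lim htail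
  rw [hLpop_eq, ← add_zero (∑' x, q0 x * φ x)]
  exact (hφ_lim.add hdiff_lim).congr fun n => (hLhat_eq n ω).symm

/-- Almost-sure pointwise convergence of the empirical LRM loss.
Under the standing assumptions (i.i.d. data from an admissible `q0`, admissible model
family, admissible Laplace-smoothed estimator), Assumption A2, Assumption A3 and
Assumption A4 with `r = 0`, for every `θ ∈ Θ` the empirical LRM loss converges to the
population LRM loss almost surely. -/
theorem lrm_loss_pointwise_convergence
    {𝒳 : Type*} [Countable 𝒳] [DecidableEq 𝒳] [MeasurableSpace 𝒳] [MeasurableSingletonClass 𝒳]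
    {Ω : Type*} [MeasurableSpace Ω] (μ : Measure Ω) [IsProbabilityMeasure μ]
    {d : ℕ} (Θ : Set (Fin d → ℝ))
    -- q0 is a PMF on 𝒳
    (q0 : 𝒳 → ℝ) (hq0_nonneg : ∀ x, 0 ≤ q0 x) (hq0_sum : ∑' x, q0 x = 1)
    -- matching set with M(x) ⊆ supp(q0) and |M(x)| = m < ∞
    (M : 𝒳 → Finset 𝒳) (m : ℕ) (hm : 0 < m) (hM_card : ∀ x, (M x).card = m)
    (hM_supp : ∀ x, ∀ x' ∈ M x, 0 < q0 x')
    -- Standing Assumption (a): q0 ∈ Q^adm_{q0}(𝒳)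
    (hq0_adm : Summable fun x => q0 x * ∑ x' ∈ M x, (Real.log (q0 x' / q0 x)) ^ 2)
    -- the model family
    (pθ : (Fin d → ℝ) → 𝒳 → ℝ)
    -- Standing Assumption (b): every p_θ, θ ∈ Θ, lies in Q^adm_{q0}(𝒳)
    (hpθ_pos : ∀ θ ∈ Θ, ∀ x, 0 < q0 x → 0 < pθ θ x)
    (hpθ_supp : ∀ θ ∈ Θ, ∀ x, 0 < pθ θ x → 0 < q0 x)
    (hpθ_adm : ∀ θ ∈ Θ, Summable fun x => q0 x * ∑ x' ∈ M x, (Real.log (pθ θ x' / pθ θ x)) ^ 2)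
    -- i.i.d. observations from q0
    (X : ℕ → Ω → 𝒳)
    (hX_meas : ∀ i, Measurable (X i))
    (hX_dist : ∀ i x, μ (X i ⁻¹' {x}) = ENNReal.ofReal (q0 x))
    (hX_indep : iIndepFun X μ)
    -- the Laplace-smoothed estimator q̂_α with α > 0
    (α : ℝ) (hα : 0 < α)
    (qdag : 𝒳 → ℝ) (hqdag_nonneg : ∀ x, 0 ≤ qdag x) (hqdag_pos : ∀ x, 0 < q0 x → 0 < qdag x)
    (Zdag : ℝ) (hZdag : HasSum qdag Zdag)
    (qhat : ℕ → Ω → 𝒳 → ℝ)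
    (hqhat : ∀ n ω x, qhat n ω x =
      ((∑ i ∈ Finset.range n, if X i ω = x then (1 : ℝ) else 0) + α * qdag x)
        / ((n : ℝ) + α * Zdag))
    -- Standing Assumption (c): q̂_α ∈ Q^adm_{q0}(𝒳) almost surely
    (hqhat_adm : ∀ n, ∀ᵐ ω ∂μ,
      Summable fun x => q0 x * ∑ x' ∈ M x, (Real.log (qhat n ω x' / qhat n ω x)) ^ 2)
    -- Assumption A2: either 𝒳 is finite, or 𝒳 is countably infinite, q0 is subexponential,
    -- and the log-ratios of q0 and q̂_α grow at most polynomially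
    (nrmX : 𝒳 → ℝ) (hnrmX : ∀ x, 0 ≤ nrmX x)
    (hA2 : Finite 𝒳 ∨
      (Infinite 𝒳 ∧ (∃ c > (0 : ℝ), Summable fun x => q0 x * Real.exp (c * nrmX x)) ∧
        ∃ Kq0 > (0 : ℝ), ∃ γ > (1 : ℝ), ∃ Khat : ℕ → ℝ,
          (∀ n, 0 ≤ Khat n) ∧ IsBoundedUnder (· ≤ ·) atTop Khat ∧
          (∀ x, ∀ x' ∈ M x, |Real.log (q0 x' / q0 x)| ≤ Kq0 * (1 + nrmX x ^ γ)) ∧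
          (∀ n ω x, ∀ x' ∈ M x,
            |Real.log (qhat n ω x' / qhat n ω x)| ≤ Khat n * (1 + nrmX x ^ γ))))
    -- the population and empirical LRM losses
    (Lpop : (Fin d → ℝ) → ℝ)
    (hLpop : ∀ θ, Lpop θ = ∑' x, q0 x * ((1 / ((M x).card : ℝ)) *
      ∑ x' ∈ M x, ((Real.log (pθ θ x' / pθ θ x)) ^ 2
        - 2 * Real.log (pθ θ x' / pθ θ x) * Real.log (q0 x' / q0 x))))
    (Lhat : ℕ → Ω → (Fin d → ℝ) → ℝ)
    (hLhat : ∀ n ω θ, Lhat n ω θ = (1 / (n : ℝ)) * ∑ i ∈ Finset.range n,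
      ((1 / ((M (X i ω)).card : ℝ)) * ∑ x' ∈ M (X i ω),
        ((Real.log (pθ θ x' / pθ θ (X i ω))) ^ 2
          - 2 * Real.log (pθ θ x' / pθ θ (X i ω))
              * Real.log (qhat n ω x' / qhat n ω (X i ω)))))
    -- Assumption A3: Θ is open, convex and bounded, and empirical minimisers
    -- eventually exist almost surely
    (hΘ_open : IsOpen Θ) (hΘ_convex : Convex ℝ Θ) (hΘ_bounded : Bornology.IsBounded Θ)
    (hA3_min : ∀ᵐ ω ∂μ, ∀ᶠ n in atTop, ∃ θ ∈ Θ, IsMinOn (Lhat n ω) Θ θ)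
    -- Assumption A4 with r = 0: smoothness of the model and an L²(q0) envelope for the
    -- log-ratios (the 0-th derivative)
    (hA4_smooth : ∀ x, ContDiffOn ℝ 3 (fun θ => pθ θ x) Θ)
    (K : ℕ → 𝒳 → ℝ)
    (hK_L2 : ∀ ρ ≤ 0, Summable fun x => q0 x * (K ρ x) ^ 2)
    (hA4_bound : ∀ ρ ≤ 0, ∀ x, ∀ x' ∈ M x, ∀ θ ∈ Θ,
      ‖iteratedFDerivWithin ℝ ρ (fun t => Real.log (pθ t x' / pθ t x)) Θ θ‖ ≤ K ρ x) :
    -- conclusion: almost-sure pointwise convergence of the empirical loss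
    ∀ θ ∈ Θ, ∀ᵐ ω ∂μ, Tendsto (fun n => Lhat n ω θ) atTop (𝓝 (Lpop θ)) :=
  lrm_loss_pointwise_convergence_general μ Θ q0 hq0_nonneg M hM_supp hq0_adm pθ hpθ_adm X hX_meas
    hX_dist hX_indep α qdag Zdag qhat hqhat nrmX hnrmX hA2 Lpop hLpop Lhat hLhat K hK_L2 hA4_bound
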